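/- arXiv:1408.2414 — 6 statements merged into one kernel-verified Lean document; each statement's English description precedes it below -/
import Mathlib

section
/- Let n ≥ 1 and let A be an invertible n×n real matrix such that there exists a constant K ≥ 1 with ‖A^m‖^n ≤ K·|det(A^m)| for all positive integers m, where ‖·‖ denotes the operator norm with respect to the Euclidean norm on ℝ^n. Then any two roots (in ℂ) of the characteristic polynomial of A have the same absolute value, and A, regarded as a complex matrix, is diagonalizable over ℂ (i.e., similar over ℂ to a diagonal matrix). -/
/-- Operator norm of a real matrix acting on Euclidean space. -/
noncomputable def euclideanOpNorm {n : ℕ} (A : Matrix (Fin n) (Fin n) ℝ) : ℝ :=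
  ‖Matrix.toEuclideanCLM (𝕜 := ℝ) A‖

/-!
Over `ℂ`, an eigenvector of `A` with eigenvalue `μ` gives `|μ| ^ m ≤ ‖A ^ m‖`, while
`|det A| = ∏ |μᵢ|`. For an eigenvalue of maximal modulus `ρ` the hypothesis thus yields
`(ρ ^ n) ^ m ≤ K |det A| ^ m` for every `m`, hence `ρ ^ n ≤ ∏ |μᵢ|`, which forces `|μᵢ| = ρ` for
all `i`. Consequently `‖A ^ m‖ ≤ K ρ ^ m`. On a Jordan chain `(A - μ) ^ 2 v = 0` with `|μ| = ρ`,
the vector `A ^ m v` contains the term `m μ ^ (m - 1) (A - μ) v`, which grows like `m ρ ^ m`; so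
`(A - μ) v = 0`, all generalized eigenspaces are eigenspaces, and `A` is diagonalizable.
-/

open Module NNReal WithLp

theorem le_of_forall_pow_le_mul_pow {a b K : ℝ} (hb : 0 ≤ b) (hK : 0 < K)
    (h : ∀ m, 0 < m → a ^ m ≤ K * b ^ m) : a ≤ b := by
  by_contra! hba
  have ha : 0 < a := hb.trans_lt hba
  obtain ⟨m, hm⟩ := exists_pow_lt_of_lt_one (inv_pos.mpr hK) ((div_lt_one ha).mpr hba)
  have : (b / a) ^ (m + 1) < K⁻¹ :=
    (pow_le_pow_of_le_one (by positivity) ((div_le_one ha).mpr hba.le) m.le_succ).trans_lt hm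
  rw [div_pow, div_lt_iff₀ (by positivity), ← div_eq_inv_mul, lt_div_iff₀ hK, mul_comm] at this
  exact (h (m + 1) m.succ_pos).not_gt this

theorem Multiset.eq_of_le_of_pow_card_le_prod {s : Multiset ℝ≥0} {ρ : ℝ≥0}
    (hle : ∀ x ∈ s, x ≤ ρ) (hprod : ρ ^ card s ≤ s.prod) : ∀ x ∈ s, x = ρ := by
  intro x hx
  obtain ⟨t, rfl⟩ := Multiset.exists_cons_of_mem hx
  refine le_antisymm (hle x hx) ?_
  rcases eq_or_ne ρ 0 with hρ | hρ
  · exact hρ ▸ _root_.zero_le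
  refine le_of_mul_le_mul_right ?_ (pow_pos (pos_iff_ne_zero.mpr hρ) (card t))
  calc ρ * ρ ^ card t = ρ ^ card (x ::ₘ t) := by rw [Multiset.card_cons, pow_succ']
    _ ≤ x * t.prod := by rwa [← Multiset.prod_cons]
    _ ≤ x * ρ ^ card t := by
        gcongr
        exact t.prod_le_pow_card ρ fun y hy => hle y (Multiset.mem_cons_of_mem hy)

namespace Module.End

variable {K V : Type*} [Field K] [AddCommGroup V] [Module K V]

theorem mem_roots_charpoly_iff [FiniteDimensional K V] {f : End K V} {μ : K} :
    μ ∈ f.charpoly.roots ↔ f.HasEigenvalue μ := by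
  rw [Polynomial.mem_roots (LinearMap.charpoly_monic f).ne_zero, hasEigenvalue_iff_isRoot_charpoly]

theorem card_roots_charpoly [IsAlgClosed K] [FiniteDimensional K V] (f : End K V) :
    Multiset.card f.charpoly.roots = finrank K V := by
  rw [IsAlgClosed.card_roots_eq_natDegree, LinearMap.charpoly_natDegree]

theorem mem_genEigenspace_two_iff {f : End K V} {μ : K} {x : V} :
    x ∈ f.genEigenspace μ 2 ↔ f (f x - μ • x) = μ • (f x - μ • x) := by
  rw [← Nat.cast_ofNat, mem_genEigenspace_nat, LinearMap.mem_ker, pow_two, mul_apply]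
  simp [sub_eq_zero]

theorem iSup_eigenspace_eq_top_of_genEigenspace_two_le [IsAlgClosed K] [FiniteDimensional K V]
    {f : End K V} (hf : ∀ μ, f.genEigenspace μ 2 ≤ f.eigenspace μ) :
    ⨆ μ, f.eigenspace μ = ⊤ := by
  refine eq_top_iff.mpr <| (iSup_maxGenEigenspace_eq_top f).ge.trans <| iSup_mono fun μ x hx => ?_
  have hker : LinearMap.ker ((f - μ • 1) ^ 1) = LinearMap.ker ((f - μ • 1) ^ 2) := by
    simpa only [← genEigenspace_nat, Nat.cast_one, Nat.cast_ofNat] using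
      le_antisymm ((f.genEigenspace μ).mono (by norm_num)) (hf μ)
  obtain ⟨k, hk⟩ := (mem_maxGenEigenspace f μ x).mp hx
  have hx' : x ∈ LinearMap.ker ((f - μ • 1) ^ (1 + k)) := by
    rw [pow_add, LinearMap.mem_ker, mul_apply, hk, map_zero]
  rwa [← ker_pow_constant hker k, ← genEigenspace_nat, Nat.cast_one] at hx'

theorem exists_toMatrix_eq_inv_mul_diagonal_mul {ι : Type*} [Fintype ι] [DecidableEq ι]
    (b : Basis ι K V) {f : End K V} (hf : ⨆ μ, f.eigenspace μ = ⊤) :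
    ∃ (P : Matrix ι ι K) (d : ι → K),
      IsUnit P.det ∧ LinearMap.toMatrix b b f = P⁻¹ * Matrix.diagonal d * P := by
  classical
  have : FiniteDimensional K V := b.finiteDimensional_of_finite
  have hint : DirectSum.IsInternal f.eigenspace :=
    DirectSum.isInternal_submodule_of_iSupIndep_of_iSup_eq_top f.eigenspaces_iSupIndep hf
  let e := hint.collectedBasis fun μ => Module.finBasis K (f.eigenspace μ)
  let σ := e.indexEquiv b
  let c := e.reindex σ
  let d : ι → K := fun i => (σ.symm i).1
  have hc : ∀ i, f (c i) = d i • c i := fun i => by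
    rw [← mem_eigenspace_iff, e.reindex_apply]
    exact hint.collectedBasis_mem _ (σ.symm i)
  have hdiag : LinearMap.toMatrix c c f = Matrix.diagonal d := by
    ext i j
    rw [LinearMap.toMatrix_apply, hc, map_smul, c.repr_self]
    by_cases h : i = j <;> simp [h]
  refine ⟨c.toMatrix b, d, ?_, ?_⟩
  · exact Matrix.isUnit_det_of_left_inverse (b.toMatrix_mul_toMatrix_flip c)
  · rw [Matrix.inv_eq_left_inv (b.toMatrix_mul_toMatrix_flip c), ← hdiag,
      basis_toMatrix_mul_linearMap_toMatrix_mul_basis_toMatrix]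

end Module.End

theorem Module.End.nnnorm_det_eq_prod_roots_charpoly {K V : Type*} [NormedField K] [IsAlgClosed K]
    [AddCommGroup V] [Module K V] [FiniteDimensional K V] (f : End K V) :
    ‖LinearMap.det f‖₊ = (f.charpoly.roots.map (‖·‖₊)).prod := by
  rw [det_eq_prod_roots_charpoly_of_splits (IsAlgClosed.splits _)]
  exact map_multiset_prod nnnormHom _

namespace ContinuousLinearMap

section RCLike

variable {𝕜 E : Type*} [RCLike 𝕜] [NormedAddCommGroup E] [NormedSpace 𝕜 E]

theorem norm_pow_le_norm_pow_of_apply_eq_smul {T : E →L[𝕜] E} {μ : 𝕜} {x : E} (hx : x ≠ 0)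
    (hTx : T x = μ • x) (m : ℕ) : ‖μ‖ ^ m ≤ ‖T ^ m‖ := by
  have hpow : (T ^ m) x = μ ^ m • x := by
    induction m with
    | zero => simp
    | succ m ih => rw [pow_succ, mul_apply_eq_comp, hTx, map_smul, ih, smul_smul, pow_succ']
  have := (T ^ m).le_opNorm x
  rw [hpow, norm_smul, norm_pow] at this
  exact le_of_mul_le_mul_right this (norm_pos_iff.mpr hx)

-- Multiplied through by `μ` so that no exponent `m - 1` occurs.
theorem smul_pow_apply_of_apply_sub_smul {T : E →L[𝕜] E} {μ : 𝕜} {x : E}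
    (hx : T (T x - μ • x) = μ • (T x - μ • x)) (m : ℕ) :
    μ • (T ^ m) x = μ ^ (m + 1) • x + ((m : 𝕜) * μ ^ m) • (T x - μ • x) := by
  induction m with
  | zero => simp
  | succ m ih =>
    have : μ • (T ^ (m + 1)) x = T (μ • (T ^ m) x) := by
      rw [map_smul, pow_succ', mul_apply_eq_comp]
    rw [this, ih, map_add, map_smul, map_smul, hx]
    push_cast
    module

theorem apply_eq_smul_of_norm_pow_le {T : E →L[𝕜] E} {μ : 𝕜} {C : ℝ}
    (hT : ∀ m, 0 < m → ‖T ^ m‖ ≤ C * ‖μ‖ ^ m) {x : E} (hx : T (T x - μ • x) = μ • (T x - μ • x)) :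
    T x = μ • x := by
  rcases eq_or_ne μ 0 with rfl | hμ
  · have hT0 : T = 0 := norm_le_zero_iff.mp (by simpa using hT 1 one_pos)
    simp [hT0]
  rw [← sub_eq_zero, ← norm_le_zero_iff]
  set w := T x - μ • x
  have hbound : ∀ m : ℕ, 0 < m → (m : ℝ) * ‖w‖ ≤ (C + 1) * ‖μ‖ * ‖x‖ := by
    intro m hm
    have hμm : 0 < ‖μ‖ ^ m := pow_pos (norm_pos_iff.mpr hμ) m
    refine le_of_mul_le_mul_left ?_ hμm
    calc ‖μ‖ ^ m * (m * ‖w‖) = ‖((m : 𝕜) * μ ^ m) • w‖ := by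
          rw [norm_smul, norm_mul, norm_pow, RCLike.norm_natCast]; ring
      _ = ‖μ • (T ^ m) x - μ ^ (m + 1) • x‖ := by
          rw [smul_pow_apply_of_apply_sub_smul hx, add_sub_cancel_left]
      _ ≤ ‖μ‖ * (‖T ^ m‖ * ‖x‖) + ‖μ‖ ^ (m + 1) * ‖x‖ := by
          grw [norm_sub_le, norm_smul, norm_smul, norm_pow, (T ^ m).le_opNorm]
      _ ≤ ‖μ‖ * (C * ‖μ‖ ^ m * ‖x‖) + ‖μ‖ ^ (m + 1) * ‖x‖ := by
          grw [hT m hm]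
      _ = ‖μ‖ ^ m * ((C + 1) * ‖μ‖ * ‖x‖) := by ring
  by_contra! hw
  obtain ⟨m, hm⟩ := exists_nat_gt ((C + 1) * ‖μ‖ * ‖x‖ / ‖w‖)
  have := hbound (m + 1) m.succ_pos
  rw [div_lt_iff₀ hw] at hm
  push_cast at this
  nlinarith

end RCLike

variable {E : Type*} [NormedAddCommGroup E] [NormedSpace ℂ E]

def IsUniformlyQuasiconformal (T : E →L[ℂ] E) : Prop :=
  ∃ K : ℝ, 1 ≤ K ∧ ∀ m, 0 < m →
    ‖T ^ m‖ ^ finrank ℂ E ≤ K * ‖LinearMap.det (T : E →ₗ[ℂ] E)‖ ^ m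

variable [FiniteDimensional ℂ E]

namespace IsUniformlyQuasiconformal

variable {T : E →L[ℂ] E}

theorem nnnorm_eq_of_hasEigenvalue (hT : T.IsUniformlyQuasiconformal) {μ ν : ℂ}
    (hμ : End.HasEigenvalue (T : E →ₗ[ℂ] E) μ) (hν : End.HasEigenvalue (T : E →ₗ[ℂ] E) ν) :
    ‖μ‖₊ = ‖ν‖₊ := by
  obtain ⟨K, hK, hbound⟩ := hT
  set R := (T : E →ₗ[ℂ] E).charpoly.roots
  obtain ⟨μ₀, hμ₀, hmax⟩ := R.toFinset.exists_max_image (‖·‖₊)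
    ⟨μ, Multiset.mem_toFinset.mpr (End.mem_roots_charpoly_iff.mpr hμ)⟩
  obtain ⟨v, hv⟩ :=
    (End.mem_roots_charpoly_iff.mp (Multiset.mem_toFinset.mp hμ₀)).exists_hasEigenvector
  have hdet : ‖μ₀‖ ^ finrank ℂ E ≤ ‖LinearMap.det (T : E →ₗ[ℂ] E)‖ := by
    refine le_of_forall_pow_le_mul_pow (norm_nonneg _) (by linarith) fun m hm => ?_
    calc (‖μ₀‖ ^ finrank ℂ E) ^ m = (‖μ₀‖ ^ m) ^ finrank ℂ E := by ring
      _ ≤ ‖T ^ m‖ ^ finrank ℂ E := by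
          gcongr
          exact norm_pow_le_norm_pow_of_apply_eq_smul hv.2 hv.apply_eq_smul m
      _ ≤ K * ‖LinearMap.det (T : E →ₗ[ℂ] E)‖ ^ m := hbound m hm
  have hall := Multiset.eq_of_le_of_pow_card_le_prod (s := R.map (‖·‖₊)) (ρ := ‖μ₀‖₊)
    (by simpa using fun x hx => hmax x (Multiset.mem_toFinset.mpr hx))
    (by
      rw [Multiset.card_map, End.card_roots_charpoly, ← End.nnnorm_det_eq_prod_roots_charpoly,
        ← NNReal.coe_le_coe]
      simpa using hdet)
  rw [hall _ (Multiset.mem_map_of_mem _ (End.mem_roots_charpoly_iff.mpr hμ)),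
    hall _ (Multiset.mem_map_of_mem _ (End.mem_roots_charpoly_iff.mpr hν))]

theorem norm_det_eq_norm_pow_finrank (hT : T.IsUniformlyQuasiconformal) {μ : ℂ}
    (hμ : End.HasEigenvalue (T : E →ₗ[ℂ] E) μ) :
    ‖LinearMap.det (T : E →ₗ[ℂ] E)‖ = ‖μ‖ ^ finrank ℂ E := by
  have hrep : (T : E →ₗ[ℂ] E).charpoly.roots.map (‖·‖₊) =
      Multiset.replicate (finrank ℂ E) ‖μ‖₊ := by
    refine Multiset.eq_replicate.mpr
      ⟨by rw [Multiset.card_map, End.card_roots_charpoly], fun x hx => ?_⟩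
    obtain ⟨ν, hν, rfl⟩ := Multiset.mem_map.mp hx
    exact hT.nnnorm_eq_of_hasEigenvalue (End.mem_roots_charpoly_iff.mp hν) hμ
  rw [← coe_nnnorm, End.nnnorm_det_eq_prod_roots_charpoly, hrep, Multiset.prod_replicate,
    NNReal.coe_pow, coe_nnnorm]

theorem exists_norm_pow_le (hT : T.IsUniformlyQuasiconformal) (hE : 0 < finrank ℂ E) {μ : ℂ}
    (hμ : End.HasEigenvalue (T : E →ₗ[ℂ] E) μ) :
    ∃ C, ∀ m, 0 < m → ‖T ^ m‖ ≤ C * ‖μ‖ ^ m := by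
  obtain ⟨K, hK, hbound⟩ := hT
  refine ⟨K, fun m hm => (pow_le_pow_iff_left₀ (norm_nonneg _) (by positivity) hE.ne').mp ?_⟩
  calc ‖T ^ m‖ ^ finrank ℂ E ≤ K * ‖LinearMap.det (T : E →ₗ[ℂ] E)‖ ^ m := hbound m hm
    _ = K * (‖μ‖ ^ m) ^ finrank ℂ E := by
        rw [norm_det_eq_norm_pow_finrank ⟨K, hK, hbound⟩ hμ]
        ring
    _ ≤ K ^ finrank ℂ E * (‖μ‖ ^ m) ^ finrank ℂ E := by
        gcongr
        exact le_self_pow₀ hK hE.ne'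
    _ = (K * ‖μ‖ ^ m) ^ finrank ℂ E := (mul_pow _ _ _).symm

theorem iSup_eigenspace_eq_top (hT : T.IsUniformlyQuasiconformal) (hE : 0 < finrank ℂ E) :
    ⨆ μ, End.eigenspace (T : E →ₗ[ℂ] E) μ = ⊤ := by
  refine End.iSup_eigenspace_eq_top_of_genEigenspace_two_le fun μ x hx => ?_
  rw [End.mem_genEigenspace_two_iff] at hx
  rw [End.mem_eigenspace_iff]
  by_cases hw : (T : E →ₗ[ℂ] E) x - μ • x = 0
  · exact sub_eq_zero.mp hw
  obtain ⟨C, hC⟩ := hT.exists_norm_pow_le hE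
    (End.hasEigenvalue_of_hasEigenvector ⟨End.mem_eigenspace_iff.mpr hx, hw⟩)
  exact apply_eq_smul_of_norm_pow_le hC hx

end IsUniformlyQuasiconformal

end ContinuousLinearMap

theorem EuclideanSpace.norm_sq_eq_norm_re_sq_add_norm_im_sq {ι : Type*} [Fintype ι]
    (v : EuclideanSpace ℂ ι) :
    ‖v‖ ^ 2 = ‖toLp 2 fun i => (v i).re‖ ^ 2 + ‖toLp 2 fun i => (v i).im‖ ^ 2 := by
  simp only [EuclideanSpace.norm_sq_eq, ← Finset.sum_add_distrib]
  refine Finset.sum_congr rfl fun i _ => ?_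
  rw [Complex.sq_norm, Complex.normSq_apply, Real.norm_eq_abs, Real.norm_eq_abs, sq_abs, sq_abs]
  ring

namespace Matrix

variable {ι : Type*} [Fintype ι] [DecidableEq ι]

theorem norm_toEuclideanCLM_map_ofReal_le (M : Matrix ι ι ℝ) :
    ‖toEuclideanCLM (𝕜 := ℂ) (M.map Complex.ofReal)‖ ≤ ‖toEuclideanCLM (𝕜 := ℝ) M‖ := by
  refine ContinuousLinearMap.opNorm_le_bound _ (norm_nonneg _) fun v => ?_
  refine pow_le_pow_iff_left₀ (norm_nonneg _) (by positivity) two_ne_zero |>.mp ?_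
  have hre : (toLp 2 fun i => (toEuclideanCLM (𝕜 := ℂ) (M.map Complex.ofReal) v i).re) =
      toEuclideanCLM (𝕜 := ℝ) M (toLp 2 fun i => (v i).re) := by
    ext i
    simp [Matrix.mulVec, dotProduct, Complex.re_sum]
  have him : (toLp 2 fun i => (toEuclideanCLM (𝕜 := ℂ) (M.map Complex.ofReal) v i).im) =
      toEuclideanCLM (𝕜 := ℝ) M (toLp 2 fun i => (v i).im) := by
    ext i
    simp [Matrix.mulVec, dotProduct, Complex.im_sum]
  rw [EuclideanSpace.norm_sq_eq_norm_re_sq_add_norm_im_sq, hre, him, mul_pow,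
    EuclideanSpace.norm_sq_eq_norm_re_sq_add_norm_im_sq, mul_add, ← mul_pow, ← mul_pow]
  gcongr <;> exact (toEuclideanCLM (𝕜 := ℝ) M).le_opNorm _

theorem toMatrix_toEuclideanCLM {𝕜 : Type*} [RCLike 𝕜] (M : Matrix ι ι 𝕜) :
    LinearMap.toMatrix (EuclideanSpace.basisFun ι 𝕜).toBasis (EuclideanSpace.basisFun ι 𝕜).toBasis
      (toEuclideanCLM (𝕜 := 𝕜) M : EuclideanSpace 𝕜 ι →ₗ[𝕜] EuclideanSpace 𝕜 ι) = M := by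
  rw [coe_toEuclideanCLM_eq_toEuclideanLin, toEuclideanLin_eq_toLin_orthonormal,
    LinearMap.toMatrix_toLin]

theorem det_toEuclideanCLM {𝕜 : Type*} [RCLike 𝕜] (M : Matrix ι ι 𝕜) :
    LinearMap.det (toEuclideanCLM (𝕜 := 𝕜) M : EuclideanSpace 𝕜 ι →ₗ[𝕜] EuclideanSpace 𝕜 ι) =
      M.det := by
  rw [← LinearMap.det_toMatrix (EuclideanSpace.basisFun ι 𝕜).toBasis, toMatrix_toEuclideanCLM]

theorem charpoly_toEuclideanCLM {𝕜 : Type*} [RCLike 𝕜] (M : Matrix ι ι 𝕜) :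
    LinearMap.charpoly
      (toEuclideanCLM (𝕜 := 𝕜) M : EuclideanSpace 𝕜 ι →ₗ[𝕜] EuclideanSpace 𝕜 ι) = M.charpoly := by
  rw [← LinearMap.charpoly_toMatrix _ (EuclideanSpace.basisFun ι 𝕜).toBasis,
    toMatrix_toEuclideanCLM]

end Matrix

theorem Matrix.isUniformlyQuasiconformal_toEuclideanCLM_map_ofReal {n : ℕ}
    {A : Matrix (Fin n) (Fin n) ℝ} {K : ℝ} (hK : 1 ≤ K)
    (hA : ∀ m : ℕ, 0 < m → euclideanOpNorm (A ^ m) ^ n ≤ K * |(A ^ m).det|) :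
    (toEuclideanCLM (𝕜 := ℂ) (A.map Complex.ofReal)).IsUniformlyQuasiconformal := by
  refine ⟨K, hK, fun m hm => ?_⟩
  have hpow : toEuclideanCLM (𝕜 := ℂ) (A.map Complex.ofReal) ^ m =
      toEuclideanCLM (𝕜 := ℂ) ((A ^ m).map Complex.ofReal) := by
    rw [← map_pow]
    exact congrArg _ (A.map_pow Complex.ofRealHom m).symm
  have hdet : (A.map Complex.ofReal).det = A.det := (Complex.ofRealHom.map_det A).symm
  rw [finrank_euclideanSpace_fin, det_toEuclideanCLM, hpow, hdet]
  calc _ ≤ euclideanOpNorm (A ^ m) ^ n := by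
        gcongr
        exact norm_toEuclideanCLM_map_ofReal_le _
    _ ≤ K * |(A ^ m).det| := hA m hm
    _ = K * ‖(A.det : ℂ)‖ ^ m := by rw [Complex.norm_real, Real.norm_eq_abs, det_pow, abs_pow]

theorem stmt_0_general {n : ℕ} (hn : 1 ≤ n) (A : Matrix (Fin n) (Fin n) ℝ)
    (hK : ∃ K : ℝ, 1 ≤ K ∧ ∀ m : ℕ, 0 < m →
      euclideanOpNorm (A ^ m) ^ n ≤ K * |(A ^ m).det|) :
    (∀ μ₁ μ₂ : ℂ, (A.map Complex.ofReal).charpoly.IsRoot μ₁ →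
        (A.map Complex.ofReal).charpoly.IsRoot μ₂ →
        ‖μ₁‖ = ‖μ₂‖) ∧
    (∃ (P : Matrix (Fin n) (Fin n) ℂ) (d : Fin n → ℂ),
        IsUnit P.det ∧ A.map Complex.ofReal = P⁻¹ * Matrix.diagonal d * P) := by
  obtain ⟨K, hK1, hKA⟩ := hK
  set B := A.map Complex.ofReal
  have hT := Matrix.isUniformlyQuasiconformal_toEuclideanCLM_map_ofReal hK1 hKA
  have hEig : ∀ μ, B.charpoly.IsRoot μ → End.HasEigenvalue
      (Matrix.toEuclideanCLM (𝕜 := ℂ) B : EuclideanSpace ℂ (Fin n) →ₗ[ℂ] _) μ := fun μ hμ =>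
    (End.hasEigenvalue_iff_isRoot_charpoly _ μ).mpr (by rwa [Matrix.charpoly_toEuclideanCLM])
  refine ⟨fun μ₁ μ₂ h₁ h₂ =>
    congrArg NNReal.toReal (hT.nnnorm_eq_of_hasEigenvalue (hEig μ₁ h₁) (hEig μ₂ h₂)), ?_⟩
  rw [← Matrix.toMatrix_toEuclideanCLM B]
  exact End.exists_toMatrix_eq_inv_mul_diagonal_mul _
    (hT.iSup_eigenspace_eq_top (by rwa [finrank_euclideanSpace_fin]))

theorem stmt_0 {n : ℕ} (hn : 1 ≤ n) (A : Matrix (Fin n) (Fin n) ℝ)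
    (hA : IsUnit A.det)
    (hK : ∃ K : ℝ, 1 ≤ K ∧ ∀ m : ℕ, 0 < m →
      euclideanOpNorm (A ^ m) ^ n ≤ K * |(A ^ m).det|) :
    (∀ μ₁ μ₂ : ℂ, (A.map Complex.ofReal).charpoly.IsRoot μ₁ →
        (A.map Complex.ofReal).charpoly.IsRoot μ₂ →
        ‖μ₁‖ = ‖μ₂‖) ∧
    (∃ (P : Matrix (Fin n) (Fin n) ℂ) (d : Fin n → ℂ),
        IsUnit P.det ∧ A.map Complex.ofReal = P⁻¹ * Matrix.diagonal d * P) :=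
  stmt_0_general hn A hK
end

section
/- Let n ≥ 1 and let A be an invertible n×n real matrix whose characteristic polynomial has two roots in ℂ of different absolute values. Then ‖A^m‖^n / |det(A^m)| tends to infinity as m → ∞, where ‖·‖ denotes the operator norm with respect to the Euclidean norm on ℝ^n. -/
/-!
Let `μ` be a root of maximal modulus of the characteristic polynomial. Since another root is
strictly smaller, `|det A| < |μ|ⁿ`. On the other hand `μᵐ` lies in the spectrum of `Aᵐ` viewed
as a complex matrix, so `|μ|ᵐ` is bounded by its complex operator norm, which is at most a
constant times the real one. Hence `‖Aᵐ‖ⁿ / |det Aᵐ| ≥ C⁻ⁿ (|μ|ⁿ / |det A|)ᵐ → ∞`.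
-/

open Filter

open Polynomial

-- With these instances `‖M‖` is `‖toEuclideanCLM M‖`, so `euclideanOpNorm M = ‖M‖` by `rfl`.
open scoped Matrix.Norms.L2Operator

theorem Multiset.prod_map_lt_pow_card {α : Type*} {s : Multiset α} {f : α → ℝ} {r : ℝ}
    (h0 : ∀ x ∈ s, 0 ≤ f x) (hle : ∀ x ∈ s, f x ≤ r) {a : α} (ha : a ∈ s) (hlt : f a < r) :
    (s.map f).prod < r ^ card s := by
  classical
  have hr : 0 < r := (h0 a ha).trans_lt hlt
  have hrest : ((s.erase a).map f).prod ≤ r ^ card (s.erase a) := by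
    simpa using prod_map_le_prod_map₀ f (fun _ => r) (fun x hx => h0 x (mem_of_mem_erase hx))
      fun x hx => hle x (mem_of_mem_erase hx)
  rw [← cons_erase ha, map_cons, prod_cons, card_cons, pow_succ']
  exact mul_lt_mul_of_lt_of_le_of_nonneg_of_pos hlt hrest (h0 a ha) (pow_pos hr _)

namespace Matrix

variable {ι : Type*} [Fintype ι] [DecidableEq ι]

theorem norm_det_eq_prod_norm_roots_charpoly (B : Matrix ι ι ℂ) :
    ‖B.det‖ = (B.charpoly.roots.map (‖·‖)).prod := by
  rw [det_eq_prod_roots_charpoly]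
  exact map_multiset_prod (normHom : ℂ →*₀ ℝ) _

theorem exists_isRoot_charpoly_norm_det_lt {B : Matrix ι ι ℂ} {μ₁ μ₂ : ℂ}
    (h₁ : B.charpoly.IsRoot μ₁) (h₂ : B.charpoly.IsRoot μ₂) (hne : ‖μ₁‖ ≠ ‖μ₂‖) :
    ∃ μ, B.charpoly.IsRoot μ ∧ ‖B.det‖ < ‖μ‖ ^ Fintype.card ι := by
  have hroots : ∀ {ν}, ν ∈ B.charpoly.roots ↔ B.charpoly.IsRoot ν := fun {ν} =>
    mem_roots B.charpoly_monic.ne_zero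
  obtain ⟨μ, hμ, hmax⟩ := B.charpoly.roots.toFinset.exists_max_image (‖·‖)
    ⟨μ₁, Multiset.mem_toFinset.2 (hroots.2 h₁)⟩
  simp only [Multiset.mem_toFinset] at hμ hmax
  refine ⟨μ, hroots.1 hμ, ?_⟩
  obtain ⟨ν, hν, hlt⟩ : ∃ ν ∈ B.charpoly.roots, ‖ν‖ < ‖μ‖ := by
    rcases hne.lt_or_gt with h | h
    · exact ⟨μ₁, hroots.2 h₁, h.trans_le (hmax μ₂ (hroots.2 h₂))⟩
    · exact ⟨μ₂, hroots.2 h₂, h.trans_le (hmax μ₁ (hroots.2 h₁))⟩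
  rw [norm_det_eq_prod_norm_roots_charpoly, ← charpoly_natDegree_eq_dim B,
    ← IsAlgClosed.card_roots_eq_natDegree]
  exact Multiset.prod_map_lt_pow_card (fun _ _ => norm_nonneg _) hmax hν hlt

theorem exists_pos_norm_map_ofReal_le :
    ∃ C > 0, ∀ M : Matrix ι ι ℝ, ‖M.map Complex.ofReal‖ ≤ C * ‖M‖ :=
  (LinearMap.toContinuousLinearMap (Complex.ofRealAm.mapMatrix (m := ι)).toLinearMap).bound

theorem norm_pow_le_norm_pow_of_isRoot_charpoly {𝕜 : Type*} [RCLike 𝕜]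
    {B : Matrix ι ι 𝕜} {μ : 𝕜} (hμ : B.charpoly.IsRoot μ) (m : ℕ) : ‖μ‖ ^ m ≤ ‖B ^ m‖ := by
  have : Nonempty ι := by
    by_contra h
    rw [not_nonempty_iff] at h
    simp [charpoly_isEmpty] at hμ
  exact norm_pow μ m ▸ spectrum.norm_le_norm_of_mem
    (spectrum.pow_mem_pow B m (mem_spectrum_of_isRoot_charpoly hμ))

end Matrix

open Matrix in
theorem stmt_1_general {n : ℕ} (A : Matrix (Fin n) (Fin n) ℝ)
    (hA : IsUnit A.det)
    (hroots : ∃ μ₁ μ₂ : ℂ, (A.map Complex.ofReal).charpoly.IsRoot μ₁ ∧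
      (A.map Complex.ofReal).charpoly.IsRoot μ₂ ∧ ‖μ₁‖ ≠ ‖μ₂‖) :
    Tendsto (fun m : ℕ => euclideanOpNorm (A ^ m) ^ n / |(A ^ m).det|) atTop atTop := by
  obtain ⟨μ₁, μ₂, h₁, h₂, hne⟩ := hroots
  obtain ⟨μ, hμ, hdet⟩ := exists_isRoot_charpoly_norm_det_lt h₁ h₂ hne
  obtain ⟨C, hC, hmap⟩ := exists_pos_norm_map_ofReal_le (ι := Fin n)
  have hd : 0 < |A.det| := abs_pos.2 hA.ne_zero
  have hq : 1 < ‖μ‖ ^ n / |A.det| := by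
    rw [one_lt_div hd]
    have hdetA : (A.map Complex.ofReal).det = A.det := (Complex.ofRealHom.map_det A).symm
    rwa [hdetA, Complex.norm_real, Real.norm_eq_abs, Fintype.card_fin] at hdet
  have hnorm (m : ℕ) : ‖μ‖ ^ m / C ≤ euclideanOpNorm (A ^ m) := by
    rw [div_le_iff₀' hC]
    calc ‖μ‖ ^ m ≤ ‖(A.map Complex.ofReal) ^ m‖ := norm_pow_le_norm_pow_of_isRoot_charpoly hμ m
      _ = ‖(A ^ m).map Complex.ofReal‖ := by
        simpa using congrArg norm (map_pow Complex.ofRealAm.mapMatrix A m).symm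
      _ ≤ C * euclideanOpNorm (A ^ m) := hmap _
  refine tendsto_atTop_mono (fun m => ?_)
    ((tendsto_pow_atTop_atTop_of_one_lt hq).atTop_div_const (pow_pos hC n))
  calc (‖μ‖ ^ n / |A.det|) ^ m / C ^ n = (‖μ‖ ^ m / C) ^ n / |(A ^ m).det| := by
        rw [det_pow, abs_pow, div_pow, div_pow, ← pow_mul, ← pow_mul, mul_comm]
        ring
    _ ≤ euclideanOpNorm (A ^ m) ^ n / |(A ^ m).det| := by gcongr; exact hnorm m

theorem stmt_1 {n : ℕ} (hn : 1 ≤ n) (A : Matrix (Fin n) (Fin n) ℝ)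
    (hA : IsUnit A.det)
    (hroots : ∃ μ₁ μ₂ : ℂ, (A.map Complex.ofReal).charpoly.IsRoot μ₁ ∧
      (A.map Complex.ofReal).charpoly.IsRoot μ₂ ∧ ‖μ₁‖ ≠ ‖μ₂‖) :
    Tendsto (fun m : ℕ => euclideanOpNorm (A ^ m) ^ n / |(A ^ m).det|) atTop atTop :=
  stmt_1_general A hA hroots
end

section
/- Let n ≥ 1 and let A be an invertible n×n real matrix all of whose eigenvalues (roots in ℂ of its characteristic polynomial) have the same absolute value, and suppose A, regarded as a complex matrix, is not diagonalizable over ℂ. Then ‖A^m‖^n / |det(A^m)| tends to infinity as m → ∞, where ‖·‖ denotes the operator norm with respect to the Euclidean norm on ℝ^n. -/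
/-!
Let `B` be `A` viewed as a complex matrix. Not being diagonalizable, `B` has a Jordan chain
`B w = μ w`, `B v = μ v + w` with `w ≠ 0`, and then
`B ^ (k + 1) v = μ ^ (k + 1) v + (k + 1) μ ^ k w`.
The entries of `B ^ k` are real and bounded by `‖A ^ k‖`, so `‖A ^ k‖ / |μ| ^ k` grows at least
linearly in `k`. As all eigenvalues have absolute value `|μ|`, `|det A ^ k| = (|μ| ^ k) ^ n`, so
`‖A ^ k‖ ^ n / |det A ^ k|` is the `n`-th power of `‖A ^ k‖ / |μ| ^ k`.
-/

open Filter

open Matrix Module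

namespace Module.End

variable {K V : Type*} [Field K] [AddCommGroup V] [Module K V]

theorem maxGenEigenspace_eq_eigenspace_of_ker_sq_le {f : End K V} {μ : K}
    (h : LinearMap.ker ((f - μ • 1) ^ 2) ≤ LinearMap.ker (f - μ • 1)) :
    f.maxGenEigenspace μ = f.eigenspace μ := by
  have hker : LinearMap.ker ((f - μ • 1) ^ 1) = LinearMap.ker ((f - μ • 1) ^ 2) :=
    le_antisymm (LinearMap.ker_le_ker_comp _ _) (by simpa using h)
  refine le_antisymm (fun x hx => ?_) (f.genEigenspace μ |>.monotone le_top)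
  obtain ⟨k, hk⟩ := (mem_maxGenEigenspace f μ x).mp hx
  rw [eigenspace_def, ← pow_one (f - μ • 1), ker_pow_constant hker k, pow_add]
  exact LinearMap.ker_le_ker_comp _ _ hk

end Module.End

namespace Matrix

section Field

variable {K ι : Type*} [Field K] [Fintype ι] [DecidableEq ι]

theorem exists_eq_inv_mul_diagonal_mul_of_iSup_eigenspace_eq_top (B : Matrix ι ι K)
    (h : ⨆ μ, End.eigenspace (toLin' B) μ = ⊤) :
    ∃ (P : Matrix ι ι K) (d : ι → K), IsUnit P.det ∧ B = P⁻¹ * diagonal d * P := by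
  classical
  set f : End K (ι → K) := toLin' B
  have hint : DirectSum.IsInternal f.eigenspace :=
    DirectSum.isInternal_submodule_of_iSupIndep_of_iSup_eq_top f.eigenspaces_iSupIndep h
  let b₀ := hint.collectedBasis fun μ => Module.Free.chooseBasis K (f.eigenspace μ)
  let e := b₀.indexEquiv (Pi.basisFun K ι)
  let b := b₀.reindex e
  let d : ι → K := fun i => (e.symm i).1
  have hb : ∀ i, f (b i) = d i • b i := fun i => by
    rw [b₀.reindex_apply e i]
    exact End.mem_eigenspace_iff.mp (hint.collectedBasis_mem _ (e.symm i))
  have hdiag : LinearMap.toMatrix b b f = diagonal d := by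
    ext i k
    rw [LinearMap.toMatrix_apply, hb k, map_smul, Finsupp.smul_apply, b.repr_self,
      diagonal_apply, Finsupp.single_apply]
    split_ifs with h₁ h₂ h₂
    · subst h₁; simp
    · exact absurd h₁.symm h₂
    · exact absurd h₂.symm h₁
    · simp
  have hQP := (Pi.basisFun K ι).toMatrix_mul_toMatrix_flip b
  refine ⟨b.toMatrix (Pi.basisFun K ι), d, isUnit_det_of_left_inverse hQP, ?_⟩
  rw [inv_eq_left_inv hQP, ← hdiag, basis_toMatrix_mul_linearMap_toMatrix_mul_basis_toMatrix,
    LinearMap.toMatrix_eq_toMatrix', LinearMap.toMatrix'_toLin']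

theorem exists_jordan_chain_of_not_diagonalizable [IsAlgClosed K] (B : Matrix ι ι K)
    (h : ¬ ∃ (P : Matrix ι ι K) (d : ι → K), IsUnit P.det ∧ B = P⁻¹ * diagonal d * P) :
    ∃ (μ : K) (v w : ι → K), w ≠ 0 ∧ B *ᵥ w = μ • w ∧ B *ᵥ v = μ • v + w := by
  by_contra! hchain
  refine h (B.exists_eq_inv_mul_diagonal_mul_of_iSup_eigenspace_eq_top ?_)
  set f : End K (ι → K) := toLin' B
  have hgen : ∀ μ, f.maxGenEigenspace μ = f.eigenspace μ := fun μ => by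
    refine End.maxGenEigenspace_eq_eigenspace_of_ker_sq_le fun x hx => ?_
    by_contra hne
    refine hchain μ x ((f - μ • 1) x) hne ?_ ?_
    · rw [LinearMap.mem_ker, pow_two, Module.End.mul_apply] at hx
      simpa [f, sub_eq_zero] using hx
    · simp [f]
  simpa only [hgen] using End.iSup_maxGenEigenspace_eq_top f

end Field

section CommRing

variable {R ι : Type*} [CommRing R] [Fintype ι] [DecidableEq ι]

theorem pow_succ_mulVec_of_jordan_chain {B : Matrix ι ι R} {μ : R} {v w : ι → R}
    (hw : B *ᵥ w = μ • w) (hv : B *ᵥ v = μ • v + w) (k : ℕ) :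
    (B ^ (k + 1)) *ᵥ v = μ ^ (k + 1) • v + (((k : R) + 1) * μ ^ k) • w := by
  induction k with
  | zero => simpa using hv
  | succ k ih =>
    rw [pow_succ', ← mulVec_mulVec, ih, mulVec_add, mulVec_smul, mulVec_smul, hv, hw]
    push_cast
    match_scalars <;> ring

theorem isRoot_charpoly_of_mulVec_eq_smul [IsDomain R] {B : Matrix ι ι R} {μ : R} {w : ι → R}
    (hw0 : w ≠ 0) (hw : B *ᵥ w = μ • w) : B.charpoly.IsRoot μ := by
  rw [← charpoly_toLin', ← End.hasEigenvalue_iff_isRoot_charpoly]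
  exact End.hasEigenvalue_of_hasEigenvector ⟨End.mem_eigenspace_iff.mpr hw, hw0⟩

end CommRing

theorem norm_det_eq_pow_of_forall_isRoot_charpoly {K ι : Type*} [NormedField K] [IsAlgClosed K]
    [Fintype ι] [DecidableEq ι] (B : Matrix ι ι K) {r : ℝ}
    (h : ∀ μ, B.charpoly.IsRoot μ → ‖μ‖ = r) : ‖B.det‖ = r ^ Fintype.card ι := by
  have hroots : B.charpoly.roots.map (‖·‖) = Multiset.replicate (Fintype.card ι) r := by
    rw [Multiset.eq_replicate, Multiset.card_map, ← B.charpoly_natDegree_eq_dim,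
      ← (IsAlgClosed.splits B.charpoly).natDegree_eq_card_roots]
    refine ⟨rfl, fun x hx => ?_⟩
    obtain ⟨μ, hμ, rfl⟩ := Multiset.mem_map.mp hx
    exact h μ ((Polynomial.mem_roots (charpoly_monic B).ne_zero).mp hμ)
  rw [det_eq_prod_roots_charpoly, ← Multiset.prod_replicate, ← hroots]
  exact map_multiset_prod (normHom : K →*₀ ℝ) _

end Matrix

theorem abs_apply_le_euclideanOpNorm {n : ℕ} (M : Matrix (Fin n) (Fin n) ℝ) (i j : Fin n) :
    |M i j| ≤ euclideanOpNorm M := by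
  set x : EuclideanSpace ℝ (Fin n) := EuclideanSpace.single j 1
  calc |M i j| = ‖toEuclideanCLM (𝕜 := ℝ) M x i‖ := by simp [x, mulVec, dotProduct]
    _ ≤ ‖toEuclideanCLM (𝕜 := ℝ) M x‖ := PiLp.norm_apply_le _ _
    _ ≤ euclideanOpNorm M * ‖x‖ := (toEuclideanCLM (𝕜 := ℝ) M).le_opNorm x
    _ = euclideanOpNorm M := by simp [x]

theorem norm_map_ofReal_mulVec_apply_le {n : ℕ} (M : Matrix (Fin n) (Fin n) ℝ) (v : Fin n → ℂ)
    (i : Fin n) : ‖(M.map Complex.ofReal *ᵥ v) i‖ ≤ euclideanOpNorm M * ∑ t, ‖v t‖ := by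
  calc ‖(M.map Complex.ofReal *ᵥ v) i‖ = ‖∑ t, (M i t : ℂ) * v t‖ := rfl
    _ ≤ ∑ t, ‖(M i t : ℂ) * v t‖ := norm_sum_le _ _
    _ = ∑ t, |M i t| * ‖v t‖ := by simp only [norm_mul, Complex.norm_real, Real.norm_eq_abs]
    _ ≤ ∑ t, euclideanOpNorm M * ‖v t‖ := by
      gcongr with t; exact abs_apply_le_euclideanOpNorm M i t
    _ = euclideanOpNorm M * ∑ t, ‖v t‖ := Finset.mul_sum _ _ _ |>.symm

theorem norm_jordan_chain_coeff_le {n : ℕ} (A : Matrix (Fin n) (Fin n) ℝ) {μ : ℂ} {v w : Fin n → ℂ}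
    (hw : A.map Complex.ofReal *ᵥ w = μ • w) (hv : A.map Complex.ofReal *ᵥ v = μ • v + w)
    (k : ℕ) (j : Fin n) :
    ((k : ℝ) + 1) * ‖μ‖ ^ k * ‖w j‖ ≤
      euclideanOpNorm (A ^ (k + 1)) * ∑ t, ‖v t‖ + ‖μ‖ ^ (k + 1) * ‖v j‖ := by
  have hiter := pow_succ_mulVec_of_jordan_chain hw hv k
  have hpow : A.map Complex.ofReal ^ (k + 1) = (A ^ (k + 1)).map Complex.ofReal :=
    (map_pow Complex.ofRealHom.mapMatrix A (k + 1)).symm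
  rw [hpow] at hiter
  have hcoord : ((k : ℂ) + 1) * μ ^ k * w j
      = ((A ^ (k + 1)).map Complex.ofReal *ᵥ v) j - μ ^ (k + 1) * v j := by
    rw [hiter]; simp only [Pi.add_apply, Pi.smul_apply, smul_eq_mul]; ring
  calc ((k : ℝ) + 1) * ‖μ‖ ^ k * ‖w j‖ = ‖((k : ℂ) + 1) * μ ^ k * w j‖ := by
        rw [norm_mul, norm_mul, norm_pow, ← Nat.cast_add_one (R := ℂ), Complex.norm_natCast,
          Nat.cast_add_one]
    _ ≤ ‖((A ^ (k + 1)).map Complex.ofReal *ᵥ v) j‖ + ‖μ ^ (k + 1) * v j‖ := by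
        rw [hcoord]; exact norm_sub_le _ _
    _ ≤ euclideanOpNorm (A ^ (k + 1)) * ∑ t, ‖v t‖ + ‖μ‖ ^ (k + 1) * ‖v j‖ := by
        rw [norm_mul, norm_pow]
        gcongr
        exact norm_map_ofReal_mulVec_apply_le _ _ _

theorem tendsto_euclideanOpNorm_pow_div_pow_atTop {n : ℕ} (A : Matrix (Fin n) (Fin n) ℝ)
    {μ : ℂ} (hμ : μ ≠ 0) {v w : Fin n → ℂ} (hw0 : w ≠ 0)
    (hw : A.map Complex.ofReal *ᵥ w = μ • w) (hv : A.map Complex.ofReal *ᵥ v = μ • v + w) :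
    Tendsto (fun k => euclideanOpNorm (A ^ k) / ‖μ‖ ^ k) atTop atTop := by
  obtain ⟨j, hj⟩ := Function.ne_iff.mp hw0
  have hv0 : v ≠ 0 := by
    rintro rfl
    exact hw0 (by simpa using hv.symm)
  set r := ‖μ‖
  set C := ∑ t, ‖v t‖
  have hr : 0 < r := norm_pos_iff.mpr hμ
  have hC : 0 < C := by
    obtain ⟨t, ht⟩ := Function.ne_iff.mp hv0
    exact Finset.sum_pos' (fun _ _ => norm_nonneg _) ⟨t, Finset.mem_univ t, norm_pos_iff.mpr ht⟩
  have hlin : Tendsto (fun k : ℕ => (((k : ℝ) + 1) * (‖w j‖ / r) - ‖v j‖) / C) atTop atTop :=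
    (tendsto_atTop_add_const_right _ _ <| (tendsto_atTop_add_const_right _ 1
      tendsto_natCast_atTop_atTop).atTop_mul_const (by positivity)).atTop_div_const hC
  refine (tendsto_add_atTop_iff_nat 1).mp (tendsto_atTop_mono (fun k => ?_) hlin)
  rw [div_le_div_iff₀ hC (by positivity)]
  calc (((k : ℝ) + 1) * (‖w j‖ / r) - ‖v j‖) * r ^ (k + 1)
      = ((k : ℝ) + 1) * r ^ k * ‖w j‖ - r ^ (k + 1) * ‖v j‖ := by field_simp; ring
    _ ≤ euclideanOpNorm (A ^ (k + 1)) * C := by linarith [norm_jordan_chain_coeff_le A hw hv k j]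

theorem stmt_2 {n : ℕ} (hn : 1 ≤ n) (A : Matrix (Fin n) (Fin n) ℝ)
    (hA : IsUnit A.det)
    (hroots : ∀ μ₁ μ₂ : ℂ, (A.map Complex.ofReal).charpoly.IsRoot μ₁ →
      (A.map Complex.ofReal).charpoly.IsRoot μ₂ → ‖μ₁‖ = ‖μ₂‖)
    (hnotdiag : ¬ ∃ (P : Matrix (Fin n) (Fin n) ℂ) (d : Fin n → ℂ),
      IsUnit P.det ∧ A.map Complex.ofReal = P⁻¹ * Matrix.diagonal d * P) :
    Tendsto (fun m : ℕ => euclideanOpNorm (A ^ m) ^ n / |(A ^ m).det|) atTop atTop := by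
  obtain ⟨μ, v, w, hw0, hw, hv⟩ :=
    (A.map Complex.ofReal).exists_jordan_chain_of_not_diagonalizable hnotdiag
  have hμroot := isRoot_charpoly_of_mulVec_eq_smul hw0 hw
  have hdet : |A.det| = ‖μ‖ ^ n := by
    have := (A.map Complex.ofReal).norm_det_eq_pow_of_forall_isRoot_charpoly
      fun ν hν => hroots ν μ hν hμroot
    have hdetC : (A.map Complex.ofReal).det = A.det := (RingHom.map_det Complex.ofRealHom A).symm
    rwa [hdetC, Complex.norm_real, Fintype.card_fin] at this
  have hμ : μ ≠ 0 := by
    rintro rfl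
    rw [norm_zero, zero_pow (by omega)] at hdet
    exact hA.ne_zero (abs_eq_zero.mp hdet)
  have hratio : ∀ k : ℕ, euclideanOpNorm (A ^ k) ^ n / |(A ^ k).det|
      = (euclideanOpNorm (A ^ k) / ‖μ‖ ^ k) ^ n := fun k => by
    rw [det_pow, abs_pow, hdet, div_pow, ← pow_mul, ← pow_mul, mul_comm]
  simp_rw [hratio]
  exact (tendsto_pow_atTop (by omega)).comp
    (tendsto_euclideanOpNorm_pow_div_pow_atTop A hμ hw0 hw hv)
end

section
/- Let n ≥ 1, let λ > 0, and let A be an invertible n×n real matrix which, regarded as a complex matrix, is diagonalizable over ℂ and all of whose eigenvalues (roots in ℂ of its characteristic polynomial) have absolute value λ. Then there exist an invertible n×n real matrix P and an orthogonal n×n real matrix O such that A = P⁻¹·(λO)·P. -/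
/-!
Over `ℂ`, write `A = Q⁻¹ D Q` with `D` diagonal. Every diagonal entry of `D` is an eigenvalue, so
`Dᴴ D = λ² I`, and hence `A` scales the positive definite Hermitian form `H = Qᴴ Q` by `λ²`:
`Aᴴ H A = λ² H`. Since `A` is real, the real part `S` of `H` is a real positive definite form with
`Aᵀ S A = λ² S`. Factoring `S = Pᵀ P` with `P` invertible, the matrix `O = λ⁻¹ P A P⁻¹` is
orthogonal and `A = P⁻¹ (λ O) P`.
-/

open Matrix

namespace Matrix

open scoped ComplexOrder

variable {m : Type*}

theorem conjTranspose_map_ofReal (M : Matrix m m ℝ) :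
    (M.map Complex.ofReal)ᴴ = Mᵀ.map Complex.ofReal := by
  ext i j
  simp

variable [Fintype m]

theorem map_re_ofReal_mul_mul (M N : Matrix m m ℝ) (H : Matrix m m ℂ) :
    (M.map Complex.ofReal * H * N.map Complex.ofReal).map Complex.re =
      M * H.map Complex.re * N := by
  ext i j
  simp [mul_apply, Complex.re_sum, Finset.sum_mul]

theorem PosDef.map_re {H : Matrix m m ℂ} (hH : H.PosDef) : (H.map Complex.re).PosDef := by
  refine .of_dotProduct_mulVec_pos ?_ fun x hx => ?_
  · ext i j
    simp [← hH.isHermitian.apply i j]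
  · have hx' : Complex.ofReal ∘ x ≠ 0 :=
      fun h => hx (funext fun i => by simpa using congrFun h i)
    have hre : star x ⬝ᵥ H.map Complex.re *ᵥ x =
        (star (Complex.ofReal ∘ x) ⬝ᵥ H *ᵥ (Complex.ofReal ∘ x)).re := by
      simp [dotProduct, mulVec, Complex.re_sum, Finset.mul_sum]
    rw [hre]
    exact (Complex.pos_iff.mp (hH.dotProduct_mulVec_pos hx')).1

variable [DecidableEq m]

theorem isRoot_charpoly_inv_mul_diagonal_mul {R : Type*} [CommRing R] {Q : Matrix m m R}
    (hQ : IsUnit Q.det) (d : m → R) (i : m) :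
    (Q⁻¹ * diagonal d * Q).charpoly.IsRoot (d i) := by
  rw [charpoly_mul_comm, ← Matrix.mul_assoc, mul_nonsing_inv _ hQ, Matrix.one_mul,
    charpoly_diagonal, Polynomial.IsRoot, Polynomial.eval_prod]
  exact Finset.prod_eq_zero (Finset.mem_univ i) (by simp)

theorem conjTranspose_mul_mul_same_of_similar_diagonal {R : Type*} [CommRing R] [StarRing R]
    {Q : Matrix m m R} (hQ : IsUnit Q.det) {d : m → R} {c : R}
    (hd : ∀ i, star (d i) * d i = c) :
    (Q⁻¹ * diagonal d * Q)ᴴ * (Qᴴ * Q) * (Q⁻¹ * diagonal d * Q) = c • (Qᴴ * Q) := by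
  have hQstar : IsUnit Qᴴ.det := by rwa [det_conjTranspose, isUnit_star]
  have hdd : (diagonal d)ᴴ * diagonal d = c • 1 := by
    rw [diagonal_conjTranspose, diagonal_mul_diagonal, smul_one_eq_diagonal]
    exact congrArg diagonal (funext hd)
  calc (Q⁻¹ * diagonal d * Q)ᴴ * (Qᴴ * Q) * (Q⁻¹ * diagonal d * Q)
      = Qᴴ * (diagonal d)ᴴ * ((Qᴴ)⁻¹ * Qᴴ) * (Q * Q⁻¹) * diagonal d * Q := by
        simp only [conjTranspose_mul, conjTranspose_nonsing_inv, Matrix.mul_assoc]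
    _ = Qᴴ * ((diagonal d)ᴴ * diagonal d) * Q := by
        rw [nonsing_inv_mul _ hQstar, mul_nonsing_inv _ hQ]
        simp only [Matrix.mul_one, Matrix.mul_assoc]
    _ = c • (Qᴴ * Q) := by rw [hdd, Matrix.mul_smul, Matrix.mul_one, Matrix.smul_mul]

open scoped MatrixOrder in
theorem PosDef.exists_isUnit_det_conjTranspose_mul_self_eq {𝕜 : Type*} [RCLike 𝕜]
    {S : Matrix m m 𝕜} (hS : S.PosDef) : ∃ P : Matrix m m 𝕜, IsUnit P.det ∧ Pᴴ * P = S := by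
  obtain ⟨P, rfl⟩ := CStarAlgebra.nonneg_iff_eq_star_mul_self.mp hS.posSemidef.nonneg
  refine ⟨P, ?_, rfl⟩
  have hdet := (isUnit_iff_isUnit_det _).mp hS.isUnit
  rw [det_mul] at hdet
  exact isUnit_of_mul_isUnit_right hdet

theorem posDef_map_re_conjTranspose_mul_self {Q : Matrix m m ℂ} (hQ : IsUnit Q.det) :
    ((Qᴴ * Q).map Complex.re).PosDef :=
  (PosDef.conjTranspose_mul_self Q (mulVec_injective_of_isUnit
    ((isUnit_iff_isUnit_det Q).mpr hQ))).map_re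

theorem exists_orthogonal_of_transpose_mul_mul_eq_smul {K : Type*} [Field K]
    {A P : Matrix m m K} (hP : IsUnit P.det) {lam : K} (hlam : lam ≠ 0)
    (h : Aᵀ * (Pᵀ * P) * A = lam ^ 2 • (Pᵀ * P)) :
    ∃ O : Matrix m m K, Oᵀ * O = 1 ∧ A = P⁻¹ * (lam • O) * P := by
  refine ⟨lam⁻¹ • (P * A * P⁻¹), ?_, ?_⟩
  · calc (lam⁻¹ • (P * A * P⁻¹))ᵀ * (lam⁻¹ • (P * A * P⁻¹))
        = lam⁻¹ ^ 2 • (P⁻¹ᵀ * (Aᵀ * (Pᵀ * P) * A) * P⁻¹) := by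
          simp only [transpose_smul, transpose_mul, Matrix.smul_mul, Matrix.mul_smul, smul_smul,
            Matrix.mul_assoc, sq]
      _ = (P * P⁻¹)ᵀ * (P * P⁻¹) := by
          rw [h, Matrix.mul_smul, Matrix.smul_mul, smul_smul, ← mul_pow, inv_mul_cancel₀ hlam,
            one_pow, one_smul, transpose_mul]
          simp only [Matrix.mul_assoc]
      _ = 1 := by rw [mul_nonsing_inv _ hP, transpose_one, Matrix.one_mul]
  · rw [smul_smul, mul_inv_cancel₀ hlam, one_smul, Matrix.mul_assoc, Matrix.mul_assoc,
      nonsing_inv_mul _ hP, Matrix.mul_one, ← Matrix.mul_assoc, nonsing_inv_mul _ hP,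
      Matrix.one_mul]

end Matrix

theorem stmt_5_general {n : ℕ} (lam : ℝ) (hlam : 0 < lam)
    (A : Matrix (Fin n) (Fin n) ℝ)
    (hdiag : ∃ (Q : Matrix (Fin n) (Fin n) ℂ) (d : Fin n → ℂ),
      IsUnit Q.det ∧ A.map Complex.ofReal = Q⁻¹ * Matrix.diagonal d * Q)
    (hroots : ∀ μ : ℂ, (A.map Complex.ofReal).charpoly.IsRoot μ → ‖μ‖ = lam) :
    ∃ (P O : Matrix (Fin n) (Fin n) ℝ),
      IsUnit P.det ∧ Oᵀ * O = 1 ∧ A = P⁻¹ * (lam • O) * P := by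
  obtain ⟨Q, d, hQ, hAQ⟩ := hdiag
  have hd : ∀ i, star (d i) * d i = ((lam ^ 2 : ℝ) : ℂ) := fun i => by
    rw [← hroots (d i) (hAQ ▸ isRoot_charpoly_inv_mul_diagonal_mul hQ d i)]
    push_cast
    exact Complex.conj_mul' (d i)
  have hH := conjTranspose_mul_mul_same_of_similar_diagonal hQ hd
  rw [← hAQ, conjTranspose_map_ofReal] at hH
  have hS : Aᵀ * (Qᴴ * Q).map Complex.re * A = lam ^ 2 • (Qᴴ * Q).map Complex.re := by
    rw [← map_re_ofReal_mul_mul, hH]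
    ext i j
    simp only [map_apply, Matrix.smul_apply, smul_eq_mul, Complex.re_ofReal_mul]
  obtain ⟨P, hP, hPS⟩ :=
    (posDef_map_re_conjTranspose_mul_self hQ).exists_isUnit_det_conjTranspose_mul_self_eq
  rw [conjTranspose_eq_transpose_of_trivial] at hPS
  rw [← hPS] at hS
  obtain ⟨O, hO, hAO⟩ := exists_orthogonal_of_transpose_mul_mul_eq_smul hP hlam.ne' hS
  exact ⟨P, O, hP, hO, hAO⟩

theorem stmt_5 {n : ℕ} (hn : 1 ≤ n) (lam : ℝ) (hlam : 0 < lam)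
    (A : Matrix (Fin n) (Fin n) ℝ) (hA : IsUnit A.det)
    (hdiag : ∃ (Q : Matrix (Fin n) (Fin n) ℂ) (d : Fin n → ℂ),
      IsUnit Q.det ∧ A.map Complex.ofReal = Q⁻¹ * Matrix.diagonal d * Q)
    (hroots : ∀ μ : ℂ, (A.map Complex.ofReal).charpoly.IsRoot μ → ‖μ‖ = lam) :
    ∃ (P O : Matrix (Fin n) (Fin n) ℝ),
      IsUnit P.det ∧ Oᵀ * O = 1 ∧ A = P⁻¹ * (lam • O) * P :=
  stmt_5_general lam hlam A hdiag hroots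
end

section
/- Let n ≥ 1 and let A be an invertible n×n real matrix such that there exists a constant K ≥ 1 with ‖A^m‖^n ≤ K·|det(A^m)| for all positive integers m, where ‖·‖ denotes the operator norm with respect to the Euclidean norm on ℝ^n. Then there exist λ > 0, an invertible n×n real matrix P, and an orthogonal n×n real matrix O such that A = P⁻¹·(λO)·P. -/
open Matrix

/-!
Rescale `A` to `B = λ⁻¹ • A` with `|det B| = 1`. The hypothesis then bounds `‖B ^ m‖` uniformly,
and since `|det (B ^ m)| = 1` the inverses `(B ^ m)⁻¹`, being adjugates, are uniformly bounded
as well. Hence the Gram matrices `(B ^ m)ᵀ * B ^ m`, which form the orbit of `1` under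
`G ↦ Bᵀ * G * B`, stay bounded and uniformly positive definite. A limit point of their Cesàro
averages is a positive definite `M` with `Bᵀ * M * B = M`: `B` preserves the inner product
given by `M`, and conjugating by `P = √M` turns it into an orthogonal matrix.
-/

open Filter Topology
open scoped Matrix.Norms.L2Operator MatrixOrder

theorem exists_fixedPoint_of_bounded_orbit {E : Type*} [NormedAddCommGroup E]
    [NormedSpace ℝ E] [ProperSpace E] (T : E →L[ℝ] E) {a : ℕ → E} {R : ℝ}
    (ha : ∀ m, a (m + 1) = T (a m)) (haR : ∀ m, ‖a m‖ ≤ R)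
    {S : Set E} (hSc : IsClosed S) (hSconv : Convex ℝ S) (haS : ∀ m, a m ∈ S) :
    ∃ y ∈ S, T y = y := by
  set avg : ℕ → E := fun N => ∑ m ∈ Finset.range (N + 1), ((N : ℝ) + 1)⁻¹ • a m
  have havg_mem : ∀ N, avg N ∈ S ∩ Metric.closedBall 0 R := fun N =>
    (hSconv.inter (convex_closedBall 0 R)).sum_mem (fun _ _ => by positivity)
      (by rw [Finset.sum_const, Finset.card_range, nsmul_eq_mul]; push_cast; field_simp)
      (fun m _ => ⟨haS m, mem_closedBall_zero_iff.2 (haR m)⟩)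
  obtain ⟨y, hy, φ, hφ, hlim⟩ :=
    ((isCompact_closedBall (0 : E) R).inter_left hSc).tendsto_subseq havg_mem
  have hdrift : ∀ N, T (avg N) - avg N = ((N : ℝ) + 1)⁻¹ • (a (N + 1) - a 0) := by
    intro N
    simp only [avg, map_sum, map_smul, ← ha, ← Finset.sum_sub_distrib, ← smul_sub,
      ← Finset.smul_sum, Finset.sum_range_sub]
  have hdrift_lim : Tendsto (fun N => T (avg N) - avg N) atTop (𝓝 0) := by
    refine squeeze_zero_norm (fun N => ?_) <| by
      simpa using (tendsto_one_div_add_atTop_nhds_zero_nat (𝕜 := ℝ)).mul_const (2 * R)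
    rw [hdrift, norm_smul, Real.norm_of_nonneg (by positivity)]
    gcongr
    linarith [norm_sub_le (a (N + 1)) (a 0), haR (N + 1), haR 0]
  refine ⟨y, hy.1, tendsto_nhds_unique ((T.continuous.tendsto y).comp hlim) ?_⟩
  simpa [Function.comp_def] using hlim.add (hdrift_lim.comp hφ.tendsto_atTop)

section

variable {ι : Type*} [Fintype ι] [DecidableEq ι]

lemma exists_norm_inv_le_of_norm_le (L : ℝ) {δ : ℝ} (hδ : 0 < δ) :
    ∃ C, ∀ X : Matrix ι ι ℝ, ‖X‖ ≤ L → δ ≤ |X.det| → ‖X⁻¹‖ ≤ C := by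
  obtain ⟨C, hC⟩ := (isCompact_closedBall (0 : Matrix ι ι ℝ) L).exists_bound_of_continuousOn
    (continuous_id.matrix_adjugate.continuousOn)
  refine ⟨δ⁻¹ * C, fun X hXL hXdet => ?_⟩
  rw [Matrix.inv_def, Ring.inverse_eq_inv, norm_smul, norm_inv, Real.norm_eq_abs]
  gcongr
  exact hC X (mem_closedBall_zero_iff.2 hXL)

lemma dotProduct_self_le_sq_mul_dotProduct_transpose_mul_self {X : Matrix ι ι ℝ}
    (hX : IsUnit X.det) {C : ℝ} (hXC : ‖X⁻¹‖ ≤ C) (v : ι → ℝ) :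
    v ⬝ᵥ v ≤ C ^ 2 * (v ⬝ᵥ (Xᵀ * X) *ᵥ v) := by
  have hnorm : ∀ w : ι → ℝ, w ⬝ᵥ w = ‖WithLp.toLp 2 w‖ ^ 2 := fun w => by
    rw [EuclideanSpace.real_norm_sq_eq]; simp [dotProduct, sq]
  have hv : ‖WithLp.toLp 2 v‖ ≤ C * ‖WithLp.toLp 2 (X *ᵥ v)‖ := by
    refine le_trans ?_ (mul_le_mul_of_nonneg_right hXC (norm_nonneg _))
    simpa [Matrix.mulVec_mulVec, Matrix.nonsing_inv_mul _ hX] using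
      Matrix.l2_opNorm_mulVec X⁻¹ (WithLp.toLp 2 (X *ᵥ v))
  rw [← Matrix.mulVec_mulVec, Matrix.dotProduct_mulVec, Matrix.vecMul_transpose, hnorm, hnorm,
    ← mul_pow]
  exact pow_le_pow_left₀ (norm_nonneg _) hv 2

theorem exists_posDef_transpose_mul_mul_eq_self {B : Matrix ι ι ℝ} (hB : IsUnit B.det)
    {L C : ℝ} (hpow : ∀ m, ‖B ^ m‖ ≤ L) (hinv : ∀ m, ‖(B ^ m)⁻¹‖ ≤ C) :
    ∃ M : Matrix ι ι ℝ, M.PosDef ∧ Bᵀ * M * B = M := by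
  let T : Matrix ι ι ℝ →L[ℝ] Matrix ι ι ℝ :=
    LinearMap.toContinuousLinearMap ((LinearMap.mulLeft ℝ Bᵀ).comp (LinearMap.mulRight ℝ B))
  let S : Set (Matrix ι ι ℝ) := {G | G.IsHermitian ∧ ∀ v, v ⬝ᵥ v ≤ C ^ 2 * (v ⬝ᵥ G *ᵥ v)}
  have hSc : IsClosed S := by
    simp only [S, Set.ofPred_and, Set.ofPred_forall]
    refine (isClosed_eq continuous_id.matrix_conjTranspose continuous_id).inter ?_
    exact isClosed_iInter fun v => isClosed_le continuous_const <| continuous_const.mul <|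
      continuous_const.dotProduct (continuous_id.matrix_mulVec continuous_const)
  have hSconv : Convex ℝ S := by
    rintro G ⟨hGh, hG⟩ H ⟨hHh, hH⟩ a b ha hb hab
    refine ⟨(hGh.smul (IsSelfAdjoint.all a)).add (hHh.smul (IsSelfAdjoint.all b)), fun v => ?_⟩
    simp only [add_mulVec, smul_mulVec, dotProduct_add, dotProduct_smul, smul_eq_mul]
    have hvv : v ⬝ᵥ v = a * (v ⬝ᵥ v) + b * (v ⬝ᵥ v) := by rw [← add_mul, hab, one_mul]
    nlinarith [mul_le_mul_of_nonneg_left (hG v) ha, mul_le_mul_of_nonneg_left (hH v) hb]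
  obtain ⟨M, ⟨hMh, hM⟩, hTM⟩ := exists_fixedPoint_of_bounded_orbit T
    (a := fun m => (B ^ m)ᵀ * B ^ m) (R := L ^ 2)
    (fun m => by simp [T, pow_succ, Matrix.mul_assoc])
    (fun m => by
      rw [← conjTranspose_eq_transpose_of_trivial, l2_opNorm_conjTranspose_mul_self, ← sq]
      exact pow_le_pow_left₀ (norm_nonneg _) (hpow m) 2)
    hSc hSconv
    (fun m => ⟨by simpa only [conjTranspose_eq_transpose_of_trivial]
        using isHermitian_conjTranspose_mul_self (B ^ m),
      dotProduct_self_le_sq_mul_dotProduct_transpose_mul_self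
        (by simpa [det_pow] using hB.pow m) (hinv m)⟩)
  refine ⟨M, PosDef.of_dotProduct_mulVec_pos hMh fun v hv => ?_,
    by simpa [T, Matrix.mul_assoc] using hTM⟩
  have hvv : 0 < v ⬝ᵥ v := by simpa using dotProduct_self_star_pos_iff.2 hv
  rw [star_trivial]
  nlinarith [hM v, sq_nonneg C]

lemma exists_orthogonal_conj_of_posDef {B M : Matrix ι ι ℝ} (hM : M.PosDef)
    (hBM : Bᵀ * M * B = M) :
    ∃ P O : Matrix ι ι ℝ, IsUnit P.det ∧ Oᵀ * O = 1 ∧ B = P⁻¹ * O * P := by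
  set P := CFC.sqrt M
  have hPP : P * P = M := CFC.sqrt_mul_sqrt_self M hM.posSemidef.nonneg
  have hPT : Pᵀ = P := by
    simpa [conjTranspose_eq_transpose_of_trivial] using (CFC.sqrt_nonneg M).posSemidef.1.eq
  have hP : IsUnit P.det := by
    rw [← Matrix.isUnit_iff_isUnit_det]
    exact isUnit_of_mul_isUnit_left (hPP ▸ hM.isUnit)
  refine ⟨P, P * B * P⁻¹, hP, ?_, ?_⟩
  · calc (P * B * P⁻¹)ᵀ * (P * B * P⁻¹) = P⁻¹ * (Bᵀ * (P * P) * B) * P⁻¹ := by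
          simp only [transpose_mul, transpose_nonsing_inv, hPT, Matrix.mul_assoc]
      _ = P⁻¹ * P * (P * P⁻¹) := by rw [hPP, hBM, ← hPP]; simp only [Matrix.mul_assoc]
      _ = 1 := by rw [nonsing_inv_mul _ hP, mul_nonsing_inv _ hP, Matrix.one_mul]
  · simp only [← Matrix.mul_assoc, nonsing_inv_mul _ hP, Matrix.one_mul]
    rw [Matrix.mul_assoc, nonsing_inv_mul _ hP, Matrix.mul_one]

lemma exists_pos_abs_det_inv_smul_eq_one [Nonempty ι] {A : Matrix ι ι ℝ} (hA : IsUnit A.det) :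
    ∃ lam : ℝ, 0 < lam ∧ |(lam⁻¹ • A).det| = 1 := by
  have hd : 0 < |A.det| := abs_pos.2 hA.ne_zero
  refine ⟨|A.det| ^ (Fintype.card ι : ℝ)⁻¹, by positivity, ?_⟩
  rw [det_smul, abs_mul, abs_pow, abs_inv, abs_of_pos (by positivity), inv_pow,
    Real.rpow_inv_natCast_pow hd.le Fintype.card_ne_zero, inv_mul_cancel₀ hd.ne']

lemma norm_smul_pow_card_le_mul_abs_det {X : Matrix ι ι ℝ} {K : ℝ}
    (hX : ‖X‖ ^ Fintype.card ι ≤ K * |X.det|) (s : ℝ) :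
    ‖s • X‖ ^ Fintype.card ι ≤ K * |(s • X).det| := by
  rw [norm_smul, mul_pow, det_smul, abs_mul, abs_pow, Real.norm_eq_abs]
  calc |s| ^ _ * ‖X‖ ^ _ ≤ |s| ^ _ * (K * |X.det|) := by gcongr
    _ = _ := by ring

lemma norm_pow_le_rpow_of_abs_det_eq_one [Nonempty ι] {B : Matrix ι ι ℝ} (hB : |B.det| = 1)
    {K : ℝ} (hK : 1 ≤ K) (hBK : ∀ m, 0 < m → ‖B ^ m‖ ^ Fintype.card ι ≤ K * |(B ^ m).det|)
    (m : ℕ) : ‖B ^ m‖ ≤ K ^ (Fintype.card ι : ℝ)⁻¹ := by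
  rcases Nat.eq_zero_or_pos m with rfl | hm
  · rw [pow_zero, norm_one]
    exact Real.one_le_rpow hK (by positivity)
  · rw [Real.le_rpow_inv_iff_of_pos (norm_nonneg _) (by positivity) (by positivity),
      Real.rpow_natCast]
    simpa [det_pow, abs_pow, hB] using hBK m hm

end

theorem stmt_6 {n : ℕ} (hn : 1 ≤ n) (A : Matrix (Fin n) (Fin n) ℝ)
    (hA : IsUnit A.det)
    (hK : ∃ K : ℝ, 1 ≤ K ∧ ∀ m : ℕ, 0 < m →
      euclideanOpNorm (A ^ m) ^ n ≤ K * |(A ^ m).det|) :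
    ∃ (lam : ℝ) (P O : Matrix (Fin n) (Fin n) ℝ),
      0 < lam ∧ IsUnit P.det ∧ Oᵀ * O = 1 ∧ A = P⁻¹ * (lam • O) * P := by
  obtain ⟨K, hK1, hKA⟩ := hK
  have : NeZero n := ⟨by omega⟩
  obtain ⟨lam, hlam, hdet⟩ := exists_pos_abs_det_inv_smul_eq_one hA
  set B := lam⁻¹ • A
  have hBpow : ∀ m, ‖B ^ m‖ ≤ K ^ (n : ℝ)⁻¹ := by
    simpa using norm_pow_le_rpow_of_abs_det_eq_one hdet hK1 fun m hm => by
      simpa [B, smul_pow] using norm_smul_pow_card_le_mul_abs_det (X := A ^ m)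
        (by rw [Fintype.card_fin]; exact hKA m hm) (lam⁻¹ ^ m)
  obtain ⟨C, hC⟩ := exists_norm_inv_le_of_norm_le (ι := Fin n) (K ^ (n : ℝ)⁻¹) one_pos
  have hB : IsUnit B.det := isUnit_iff_ne_zero.2 fun h => by simp [h] at hdet
  obtain ⟨M, hM, hBM⟩ := exists_posDef_transpose_mul_mul_eq_self hB hBpow
    fun m => hC _ (hBpow m) (by rw [det_pow, abs_pow, hdet, one_pow])
  obtain ⟨P, O, hP, hO, hBPO⟩ := exists_orthogonal_conj_of_posDef hM hBM
  refine ⟨lam, P, O, hlam, hP, hO, ?_⟩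
  rw [Matrix.mul_smul, Matrix.smul_mul, ← hBPO, smul_inv_smul₀ hlam.ne']
end

section
/- Let E be a finite-dimensional real inner product space, let λ > 1, let O : E → E be a linear isometry (orthogonal transformation), let P : E → E be a continuous linear equivalence, and define the linear map ψ = P⁻¹ ∘ (λ·O) ∘ P. Suppose G : E → E satisfies G(0) = 0, G ∘ ψ = ψ ∘ G, and G is differentiable at 0 with derivative D. Then G(x) = D(x) for all x ∈ E; in particular, G is linear. -/
open Asymptotics Filter Function Topology

/-!
Let `r = G - D`. It commutes with `ψ` (the derivative of `G` at the fixed point `0` inherits the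
commutation) and is `o(‖x‖)` at `0`. In the coordinates given by `P`, `ψ` becomes the similarity
`λ • O`, which multiplies norms by `λ`. A bound `‖r y‖ ≤ ε ‖y‖` valid on a small ball is therefore
transported to every ball of radius `λᵏ δ`, hence to all of `E`, and `r = 0`.
-/

theorem eq_zero_of_isLittleO_of_semiconj_of_norm_eq_mul {E F : Type*} [SeminormedAddCommGroup E]
    [NormedAddCommGroup F] {f : E → F} {A : E → E} {B : F → F} {c : ℝ} (hc : 1 < c)
    (hA : Surjective A) (hA_norm : ∀ x, ‖A x‖ = c * ‖x‖) (hB_norm : ∀ y, ‖B y‖ = c * ‖y‖)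
    (hf_semiconj : Semiconj f A B) (hf : f =o[𝓝 0] fun x => x) : f = 0 := by
  have hbound : ∀ ε > 0, ∀ x, ‖f x‖ ≤ ε * ‖x‖ := by
    intro ε hε
    obtain ⟨δ, hδ, hsmall⟩ := Metric.eventually_nhds_iff.mp (hf.def hε)
    have hscaled : ∀ k : ℕ, ∀ x, ‖x‖ < c ^ k * δ → ‖f x‖ ≤ ε * ‖x‖ := by
      intro k
      induction k with
      | zero => exact fun x hx => hsmall (by simpa using hx)
      | succ k ih =>
        intro x hx
        obtain ⟨y, rfl⟩ := hA x
        have hy : ‖y‖ < c ^ k * δ := by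
          rw [hA_norm, pow_succ] at hx
          nlinarith
        calc ‖f (A y)‖ = c * ‖f y‖ := by rw [hf_semiconj.eq, hB_norm]
          _ ≤ c * (ε * ‖y‖) := by gcongr; exact ih y hy
          _ = ε * ‖A y‖ := by rw [hA_norm]; ring
    intro x
    obtain ⟨k, hk⟩ := pow_unbounded_of_one_lt (‖x‖ / δ) hc
    exact hscaled k x ((div_lt_iff₀ hδ).mp hk)
  funext x
  have hlim : Tendsto (fun ε : ℝ => ε * ‖x‖) (𝓝[>] 0) (𝓝 0) := by
    simpa using ((tendsto_id (x := 𝓝 (0 : ℝ))).mul_const ‖x‖).mono_left nhdsWithin_le_nhds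
  exact norm_le_zero_iff.mp
    (ge_of_tendsto hlim (eventually_nhdsWithin_of_forall fun ε hε => hbound ε hε x))

theorem HasFDerivAt.semiconj_of_semiconj {𝕜 E F : Type*} [NontriviallyNormedField 𝕜]
    [NormedAddCommGroup E] [NormedSpace 𝕜 E] [NormedAddCommGroup F] [NormedSpace 𝕜 F]
    {G : E → F} {D : E →L[𝕜] F} {ψ : E →L[𝕜] E} {χ : F →L[𝕜] F} (hD : HasFDerivAt G D 0)
    (hG : Semiconj G ψ χ) : Semiconj D ψ χ := by
  have hGψ : HasFDerivAt (G ∘ ψ) (D.comp ψ) 0 :=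
    (by simpa using hD : HasFDerivAt G D (ψ 0)).comp 0 ψ.hasFDerivAt
  have hχG : HasFDerivAt (χ ∘ G) (χ.comp D) 0 := χ.hasFDerivAt.comp 0 hD
  rw [hG.comp_eq] at hGψ
  exact fun x => congr($(hGψ.unique hχG) x)

theorem Asymptotics.IsLittleO.conj_continuousLinearEquiv {𝕜 E F : Type*}
    [NontriviallyNormedField 𝕜] [NormedAddCommGroup E] [NormedSpace 𝕜 E] [NormedAddCommGroup F]
    [NormedSpace 𝕜 F] {f : E → E} (hf : f =o[𝓝 0] fun x => x) (P : E ≃L[𝕜] F) :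
    (P ∘ f ∘ P.symm) =o[𝓝 0] fun x => x :=
  ((P : E →L[𝕜] F).isBigO_comp _ _).trans_isLittleO <|
    (hf.comp_tendsto (P.symm.continuous.tendsto' 0 0 (map_zero _))).trans_isBigO
      ((P.symm : F →L[𝕜] E).isBigO_id _)

theorem stmt_8 {E : Type*} [NormedAddCommGroup E] [InnerProductSpace ℝ E]
    [FiniteDimensional ℝ E] (lam : ℝ) (hlam : 1 < lam)
    (O : E →ₗᵢ[ℝ] E) (P : E ≃L[ℝ] E)
    (ψ : E →L[ℝ] E)
    (hψ : ψ = (P.symm : E →L[ℝ] E).comp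
      ((lam • O.toContinuousLinearMap).comp (P : E →L[ℝ] E)))
    (G : E → E) (hG0 : G 0 = 0) (hcomm : ∀ x, G (ψ x) = ψ (G x))
    (D : E →L[ℝ] E) (hD : HasFDerivAt G D 0) :
    ∀ x, G x = D x := by
  set A : E →L[ℝ] E := lam • O.toContinuousLinearMap
  have hA_norm : ∀ x, ‖A x‖ = lam * ‖x‖ := fun x => by
    simp [A, norm_smul, abs_of_pos (zero_lt_one.trans hlam)]
  have hA : Surjective A := fun y => by
    obtain ⟨z, hz⟩ := LinearMap.surjective_of_injective O.injective (lam⁻¹ • y)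
    refine ⟨z, ?_⟩
    simp [A, show O z = lam⁻¹ • y from hz, smul_smul, (zero_lt_one.trans hlam).ne']
  have hPψ : Semiconj P ψ A := fun x => by simp [hψ, A]
  have hr : Semiconj (fun x => G x - D x) ψ ψ := fun x => by
    simp [hcomm, (hD.semiconj_of_semiconj hcomm).eq]
  have hr_littleO : (fun x => G x - D x) =o[𝓝 0] fun x => x := by
    simpa [hG0] using hD.isLittleO
  have hconj := eq_zero_of_isLittleO_of_semiconj_of_norm_eq_mul hlam hA hA_norm hA_norm
    ((hPψ.inverse_left P.symm_apply_apply P.apply_symm_apply).trans (hr.trans hPψ))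
    (hr_littleO.conj_continuousLinearEquiv P)
  intro x
  simpa [sub_eq_zero] using congr_fun hconj (P x)
end
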